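/- arXiv:1009.2673 — 2 statements merged into one kernel-verified Lean document; each statement's English description precedes it below -/
import Mathlib

section
/- Let E be a real inner product space of dimension 2n with 2n ≥ 4, J a compatible almost complex structure, and R an algebraic curvature tensor on E that is an RK-tensor and has constant antiholomorphic sectional curvature ν. Then for every unit vector x ∈ E, S(x,x) - R(x,Jx,Jx,x) = 2(n-1)ν, where S is the Ricci tensor of R. -/
open scoped RealInnerProductSpace

/-!
The Ricci trace `S(x, x) = ∑ᵢ R(eᵢ, x, x, eᵢ)` does not depend on the orthonormal basis, so it
may be computed in an orthonormal basis extending the orthonormal pair `x, Jx`. There the term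
at `x` vanishes, the term at `Jx` is `R(x, Jx, Jx, x)`, and each of the remaining `2n - 2` basis
vectors `y` is orthogonal to both `x` and `Jx`, so it contributes `R(x, y, y, x) = ν`.
-/

theorem OrthonormalBasis.sum_apply_self_eq {E ι κ : Type*} [NormedAddCommGroup E]
    [InnerProductSpace ℝ E] [Fintype ι] [Fintype κ] (B : E →ₗ[ℝ] E →ₗ[ℝ] ℝ)
    (b : OrthonormalBasis ι ℝ E) (c : OrthonormalBasis κ ℝ E) :
    ∑ i, B (b i) (b i) = ∑ j, B (c j) (c j) := by
  have expand (i : ι) : B (b i) (b i) = ∑ j, ⟪c j, b i⟫ * B (c j) (b i) := by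
    nth_rw 1 [← c.sum_repr' (b i)]
    simp only [map_sum, map_smul, LinearMap.sum_apply, LinearMap.smul_apply, smul_eq_mul]
  calc ∑ i, B (b i) (b i) = ∑ j, B (c j) (∑ i, ⟪b i, c j⟫ • b i) := by
        simp only [expand, map_sum, map_smul, smul_eq_mul, real_inner_comm (c _)]
        exact Finset.sum_comm
    _ = ∑ j, B (c j) (c j) := by simp only [b.sum_repr']

section CompatibleComplexStructure

variable {E : Type*} [NormedAddCommGroup E] [InnerProductSpace ℝ E] {J : E →ₗ[ℝ] E}

theorem inner_self_apply_eq_zero (hJ2 : ∀ x, J (J x) = -x) (hJg : ∀ x y, ⟪J x, J y⟫ = ⟪x, y⟫)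
    (x : E) : ⟪x, J x⟫ = 0 := by
  have h := hJg x (J x)
  rw [hJ2, inner_neg_right, real_inner_comm] at h
  linarith

theorem norm_apply_eq_norm (hJg : ∀ x y, ⟪J x, J y⟫ = ⟪x, y⟫) (x : E) : ‖J x‖ = ‖x‖ := by
  have h := hJg x x
  rw [real_inner_self_eq_norm_sq, real_inner_self_eq_norm_sq] at h
  exact (sq_eq_sq₀ (norm_nonneg _) (norm_nonneg _)).1 h

theorem apply_ne_self (hJ2 : ∀ x, J (J x) = -x) (hJg : ∀ x y, ⟪J x, J y⟫ = ⟪x, y⟫)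
    {x : E} (hx : x ≠ 0) : J x ≠ x := fun h =>
  hx (inner_self_eq_zero.1 (h ▸ inner_self_apply_eq_zero hJ2 hJg x))

theorem orthonormal_pair_self_apply (hJ2 : ∀ x, J (J x) = -x)
    (hJg : ∀ x y, ⟪J x, J y⟫ = ⟪x, y⟫) {x : E} (hx : ‖x‖ = 1) :
    Orthonormal ℝ ((↑) : ({x, J x} : Set E) → E) := by
  classical
  have hxJx := inner_self_apply_eq_zero hJ2 hJg x
  have hJxx : ⟪J x, x⟫ = 0 := by rwa [real_inner_comm]
  have hne := (apply_ne_self hJ2 hJg (norm_ne_zero_iff.1 (hx.trans_ne one_ne_zero))).symm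
  rw [orthonormal_subtype_iff_ite]
  rintro v (rfl | rfl) w (rfl | rfl)
  all_goals simp [hne, hne.symm, hxJx, hJxx, hx, norm_apply_eq_norm hJg]

end CompatibleComplexStructure

section AntiholomorphicCurvature

variable {E : Type*} [NormedAddCommGroup E] [InnerProductSpace ℝ E] {J : E →ₗ[ℝ] E}
  {R : E →ₗ[ℝ] E →ₗ[ℝ] E →ₗ[ℝ] E →ₗ[ℝ] ℝ} {ν : ℝ}

theorem sum_apply_eq_card_mul_of_antiholomorphic
    (hR1 : ∀ x y z u : E, R x y z u = - R y x z u)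
    (hR2 : ∀ x y z u : E, R x y z u = - R x y u z)
    (hν : ∀ x y : E, ‖x‖ = 1 → ‖y‖ = 1 → ⟪x, y⟫ = 0 → ⟪J x, y⟫ = 0 → R x y y x = ν)
    {x : E} (hx : ‖x‖ = 1) {t : Finset E}
    (ht : ∀ v ∈ t, ‖v‖ = 1 ∧ ⟪x, v⟫ = 0 ∧ ⟪J x, v⟫ = 0) :
    ∑ v ∈ t, R v x x v = t.card * ν := by
  rw [← nsmul_eq_mul, ← Finset.sum_const]
  refine Finset.sum_congr rfl fun v hv => ?_
  obtain ⟨hv1, hxv, hJxv⟩ := ht v hv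
  rw [hR1, hR2, neg_neg]
  exact hν x v hx hv1 hxv hJxv

theorem sum_apply_eq_of_orthonormal_of_pair_mem
    (hR1 : ∀ x y z u : E, R x y z u = - R y x z u)
    (hR2 : ∀ x y z u : E, R x y z u = - R x y u z)
    (hν : ∀ x y : E, ‖x‖ = 1 → ‖y‖ = 1 → ⟪x, y⟫ = 0 → ⟪J x, y⟫ = 0 → R x y y x = ν)
    {u : Finset E} (hu : Orthonormal ℝ ((↑) : u → E)) {x : E} (hxu : x ∈ u) (hJxu : J x ∈ u)
    (hne : x ≠ J x) :
    ∑ v ∈ u, R v x x v = R x (J x) (J x) x + ((u.card : ℝ) - 2) * ν := by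
  classical
  have hu' := orthonormal_subtype_iff_ite.1 hu
  have hsu : {x, J x} ⊆ u := Finset.insert_subset hxu (Finset.singleton_subset_iff.2 hJxu)
  have hrest : ∑ v ∈ u \ {x, J x}, R v x x v = (u \ {x, J x}).card * ν := by
    refine sum_apply_eq_card_mul_of_antiholomorphic hR1 hR2 hν (hu.1 ⟨x, hxu⟩) fun v hv => ?_
    obtain ⟨hvu, hvs⟩ := Finset.mem_sdiff.1 hv
    simp only [Finset.mem_insert, Finset.mem_singleton, not_or] at hvs
    exact ⟨hu.1 ⟨v, hvu⟩, by simpa [Ne.symm hvs.1] using hu' x hxu v hvu,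
      by simpa [Ne.symm hvs.2] using hu' (J x) hJxu v hvu⟩
  have hcard : ((u \ {x, J x}).card : ℝ) + 2 = u.card := by
    exact_mod_cast Finset.card_pair hne ▸ Finset.card_sdiff_add_card_eq_card hsu
  have hxxxx : R x x x x = 0 := by linarith [hR1 x x x x]
  have hswap : R (J x) x x (J x) = R x (J x) (J x) x := by rw [hR1, hR2, neg_neg]
  rw [← Finset.sum_sdiff hsu, hrest, Finset.sum_pair hne, hxxxx, hswap, ← hcard]
  ring

end AntiholomorphicCurvature

theorem stmt_1_general {E : Type*} [NormedAddCommGroup E] [InnerProductSpace ℝ E]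
    {n : ℕ}
    (b : OrthonormalBasis (Fin (2 * n)) ℝ E)
    (J : E →ₗ[ℝ] E)
    (hJ2 : ∀ x : E, J (J x) = -x)
    (hJg : ∀ x y : E, ⟪J x, J y⟫ = ⟪x, y⟫)
    (R : E →ₗ[ℝ] E →ₗ[ℝ] E →ₗ[ℝ] E →ₗ[ℝ] ℝ)
    (hR1 : ∀ x y z u : E, R x y z u = - R y x z u)
    (hR2 : ∀ x y z u : E, R x y z u = - R x y u z)
    (ν : ℝ)
    (hν : ∀ x y : E, ‖x‖ = 1 → ‖y‖ = 1 → ⟪x, y⟫ = 0 → ⟪J x, y⟫ = 0 →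
      R x y y x = ν)
    (S : E → E → ℝ)
    (hS : ∀ x y : E, S x y = ∑ i, R (b i) x y (b i)) :
    ∀ x : E, ‖x‖ = 1 → S x x - R x (J x) (J x) x = 2 * ((n : ℝ) - 1) * ν := by
  intro x hx
  have : FiniteDimensional ℝ E := b.toBasis.finiteDimensional_of_finite
  obtain ⟨u, c, hxu, hc⟩ :=
    (orthonormal_pair_self_apply hJ2 hJg hx).exists_orthonormalBasis_extension
  obtain ⟨hxu, hJxu⟩ : x ∈ u ∧ J x ∈ u := by simpa [Set.insert_subset_iff] using hxu
  have hne := (apply_ne_self hJ2 hJg (norm_ne_zero_iff.1 (hx.trans_ne one_ne_zero))).symm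
  have hcard : u.card = 2 * n := by
    rw [← Fintype.card_coe, ← Module.finrank_eq_card_basis c.toBasis,
      Module.finrank_eq_card_basis b.toBasis, Fintype.card_fin]
  have hS : S x x = ∑ v ∈ u, R v x x v := by
    rw [hS, ← Finset.sum_coe_sort u]
    exact hc ▸ b.sum_apply_self_eq ((R.flip x).flip x) c
  rw [hS, sum_apply_eq_of_orthonormal_of_pair_mem hR1 hR2 hν (hc ▸ c.orthonormal) hxu hJxu hne,
    hcard]
  push_cast
  ring

/-- For an RK-curvature tensor of constant antiholomorphic sectional curvature ν on a
2n-dimensional space (2n ≥ 4): S(x,x) - R(x,Jx,Jx,x) = 2(n-1)ν for every unit x. -/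
theorem stmt_1 {E : Type*} [NormedAddCommGroup E] [InnerProductSpace ℝ E]
    {n : ℕ} (hn : 4 ≤ 2 * n)
    (b : OrthonormalBasis (Fin (2 * n)) ℝ E)
    (J : E →ₗ[ℝ] E)
    (hJ2 : ∀ x : E, J (J x) = -x)
    (hJg : ∀ x y : E, ⟪J x, J y⟫ = ⟪x, y⟫)
    (R : E →ₗ[ℝ] E →ₗ[ℝ] E →ₗ[ℝ] E →ₗ[ℝ] ℝ)
    (hR1 : ∀ x y z u : E, R x y z u = - R y x z u)
    (hR2 : ∀ x y z u : E, R x y z u = - R x y u z)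
    (hRb : ∀ x y z u : E, R x y z u + R y z x u + R z x y u = 0)
    (hRK : ∀ x y z u : E, R x y z u = R (J x) (J y) (J z) (J u))
    (ν : ℝ)
    (hν : ∀ x y : E, ‖x‖ = 1 → ‖y‖ = 1 → ⟪x, y⟫ = 0 → ⟪J x, y⟫ = 0 →
      R x y y x = ν)
    (S : E → E → ℝ)
    (hS : ∀ x y : E, S x y = ∑ i, R (b i) x y (b i)) :
    ∀ x : E, ‖x‖ = 1 → S x x - R x (J x) (J x) x = 2 * ((n : ℝ) - 1) * ν :=
  stmt_1_general b J hJ2 hJg R hR1 hR2 ν hν S hS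
end

section
/- Let E be a real inner product space of dimension 2n with 2n ≥ 4, J a compatible almost complex structure, and R an algebraic curvature tensor on E that is an RK-tensor and has constant antiholomorphic sectional curvature ν. Then 3S'(x,y) - (n+1)S(x,y) = (1/(2n))·(3τ' - (n+1)τ)·⟨x,y⟩ for all x,y ∈ E, where S, τ are the Ricci tensor and scalar curvature of R and S', τ' are those of R'(x,y,z,u) = R(x,y,Jz,Ju). -/
/-!
Both Ricci forms are symmetric, `S` by the symmetries of `R` and `S'` because `R` is an
RK-tensor, so the symmetric bilinear form `6 S' - (N + 2) S` (with `N = 2n`) is a multiple of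
the metric as soon as it is constant on unit vectors. For a unit vector `x` we split the traces
defining `S(x, x)` and `S'(x, x)` along `span {x, Jx}` and its orthogonal complement. On the
complement, polarizations of the antiholomorphic curvature condition express the integrands
through `ν`, the holomorphic sectional curvature `H(x) = R(x, Jx, Jx, x)` and `S`, which gives
`S(x, x) = (N - 2) ν + H(x)` and `6 S'(x, x) = (N + 2) H(x) + τ - (N² - 4) ν`.
In `6 S'(x, x) - (N + 2) S(x, x)` the term `H(x)` cancels, and taking the trace identifies
the constant as `(6 τ' - (N + 2) τ) / N`.
-/

open scoped RealInnerProductSpace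

section
variable {E : Type*} [NormedAddCommGroup E] [InnerProductSpace ℝ E]

structure IsCompatibleComplexStructure (J : E →ₗ[ℝ] E) : Prop where
  map_map : ∀ x, J (J x) = -x
  inner_map_map : ∀ x y, ⟪J x, J y⟫ = ⟪x, y⟫

structure IsAlgCurvatureTensor (R : E →ₗ[ℝ] E →ₗ[ℝ] E →ₗ[ℝ] E →ₗ[ℝ] ℝ) : Prop where
  antisymm_left : ∀ x y z u, R x y z u = -R y x z u
  antisymm_right : ∀ x y z u, R x y z u = -R x y u z
  bianchi : ∀ x y z u, R x y z u + R y z x u + R z x y u = 0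

variable {J : E →ₗ[ℝ] E} {R : E →ₗ[ℝ] E →ₗ[ℝ] E →ₗ[ℝ] E →ₗ[ℝ] ℝ} {ν : ℝ}

namespace IsCompatibleComplexStructure

lemma inner_map_left (hJ : IsCompatibleComplexStructure J) (x y : E) :
    ⟪J x, y⟫ = -⟪x, J y⟫ := by
  have := hJ.inner_map_map x (J y)
  rw [hJ.map_map, inner_neg_right] at this
  linarith

lemma inner_map_swap (hJ : IsCompatibleComplexStructure J) (x y : E) :
    ⟪J x, y⟫ = -⟪J y, x⟫ := by
  rw [hJ.inner_map_left, real_inner_comm]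

lemma inner_self_map (hJ : IsCompatibleComplexStructure J) (x : E) : ⟪x, J x⟫ = 0 := by
  have := hJ.inner_map_left x x
  rw [real_inner_comm] at this
  linarith

lemma norm_map (hJ : IsCompatibleComplexStructure J) (x : E) : ‖J x‖ = ‖x‖ := by
  rw [norm_eq_sqrt_real_inner, norm_eq_sqrt_real_inner, hJ.inner_map_map]

lemma orthonormal_pair (hJ : IsCompatibleComplexStructure J) {x : E} (hx : ‖x‖ = 1) :
    Orthonormal ℝ ![x, J x] := by
  have hJx : ‖J x‖ = 1 := by rw [hJ.norm_map, hx]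
  have hJxx : ⟪J x, x⟫ = 0 := by rw [real_inner_comm, hJ.inner_self_map]
  refine orthonormal_iff_ite.mpr fun k l => ?_
  fin_cases k <;> fin_cases l <;> simp [hx, hJx, hJxx, hJ.inner_self_map]

end IsCompatibleComplexStructure

namespace IsAlgCurvatureTensor

lemma pair_symm (hR : IsAlgCurvatureTensor R) (x y z u : E) : R x y z u = R z u x y := by
  linarith [hR.bianchi z x y u, hR.bianchi x y u z, hR.bianchi y u z x, hR.bianchi u z x y,
    hR.antisymm_right x y u z, hR.antisymm_right y u x z, hR.antisymm_left z y u x,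
    hR.antisymm_right y z u x, hR.antisymm_right u z x y, hR.antisymm_right z x u y,
    hR.antisymm_left x u z y, hR.antisymm_right u x z y, hR.antisymm_left u z y x,
    hR.antisymm_right z u y x]

lemma apply_self_left (hR : IsAlgCurvatureTensor R) (x z u : E) : R x x z u = 0 := by
  linarith [hR.antisymm_left x x z u]

lemma apply_swap_swap (hR : IsAlgCurvatureTensor R) (x y z u : E) : R x y z u = R y x u z := by
  rw [hR.antisymm_left, hR.antisymm_right, neg_neg]

lemma apply_rev (hR : IsAlgCurvatureTensor R) (x y z u : E) : R x y z u = R u z y x := by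
  rw [hR.pair_symm, hR.antisymm_left, hR.antisymm_right, neg_neg]

end IsAlgCurvatureTensor

def HasConstAntiholCurvature (J : E →ₗ[ℝ] E) (R : E →ₗ[ℝ] E →ₗ[ℝ] E →ₗ[ℝ] E →ₗ[ℝ] ℝ)
    (ν : ℝ) : Prop :=
  ∀ x y : E, ‖x‖ = 1 → ‖y‖ = 1 → ⟪x, y⟫ = 0 → ⟪J x, y⟫ = 0 → R x y y x = ν

namespace HasConstAntiholCurvature

lemma apply_eq (hν : HasConstAntiholCurvature J R ν) {x y : E} (hxy : ⟪x, y⟫ = 0)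
    (hJxy : ⟪J x, y⟫ = 0) : R x y y x = ν * (⟪x, x⟫ * ⟪y, y⟫) := by
  rcases eq_or_ne x 0 with rfl | hx
  · simp
  rcases eq_or_ne y 0 with rfl | hy
  · simp
  have h := hν (‖x‖⁻¹ • x) (‖y‖⁻¹ • y) (norm_smul_inv_norm hx) (norm_smul_inv_norm hy)
    (by simp [inner_smul_left, inner_smul_right, hxy])
    (by simp [inner_smul_left, inner_smul_right, hJxy])
  simp only [map_smul, LinearMap.smul_apply, smul_eq_mul] at h
  rw [real_inner_self_eq_norm_sq, real_inner_self_eq_norm_sq]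
  field_simp at h
  linear_combination h

lemma apply_J_eq_zero (hν : HasConstAntiholCurvature J R ν) (hJ : IsCompatibleComplexStructure J)
    (hR : IsAlgCurvatureTensor R) {x y : E} (hxy : ⟪x, y⟫ = 0) (hJxy : ⟪J x, y⟫ = 0) :
    R x y y (J x) = 0 := by
  have hJJxy : ⟪J (J x), y⟫ = 0 := by rw [hJ.map_map, inner_neg_left, hxy, neg_zero]
  have hsum := hν.apply_eq (x := x + J x) (y := y)
    (by rw [inner_add_left, hxy, hJxy, add_zero])
    (by rw [map_add, inner_add_left, hJxy, hJJxy, add_zero])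
  have hx := hν.apply_eq hxy hJxy
  have hJx := hν.apply_eq hJxy hJJxy
  simp only [map_add, LinearMap.add_apply, inner_add_left, inner_add_right,
    hJ.inner_map_map, hJ.inner_self_map, real_inner_comm x (J x)] at hsum hJx
  linear_combination (hsum - hx - hJx - hR.apply_rev (J x) y y x) / 2

lemma apply_add_apply_swap_J_eq_zero (hν : HasConstAntiholCurvature J R ν)
    (hJ : IsCompatibleComplexStructure J) (hR : IsAlgCurvatureTensor R) {x y z : E}
    (hxy : ⟪x, y⟫ = 0) (hJxy : ⟪J x, y⟫ = 0) (hxz : ⟪x, z⟫ = 0) (hJxz : ⟪J x, z⟫ = 0) :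
    R x y z (J x) + R x z y (J x) = 0 := by
  have h := hν.apply_J_eq_zero hJ hR (y := y + z) (by rw [inner_add_right, hxy, hxz, add_zero])
    (by rw [inner_add_right, hJxy, hJxz, add_zero])
  simp only [map_add, LinearMap.add_apply, hν.apply_J_eq_zero hJ hR hxy hJxy,
    hν.apply_J_eq_zero hJ hR hxz hJxz] at h
  linear_combination h

lemma apply_cross_eq (hν : HasConstAntiholCurvature J R ν) (hJ : IsCompatibleComplexStructure J)
    (hR : IsAlgCurvatureTensor R) {x v : E} (hxv : ⟪x, v⟫ = 0) (hJxv : ⟪J x, v⟫ = 0) :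
    R x (J v) (J x) v = -(1 / 2) * R x (J x) v (J v) := by
  have hxJv : ⟪x, J v⟫ = 0 := by linarith [hJ.inner_map_left x v]
  have hJxJv : ⟪J x, J v⟫ = 0 := by rw [hJ.inner_map_map, hxv]
  have h := hν.apply_add_apply_swap_J_eq_zero hJ hR hxJv hJxJv hxv hJxv
  linarith [hR.bianchi x v (J x) (J v), hR.pair_symm v (J x) x (J v),
    hR.antisymm_right x v (J v) (J x), hR.antisymm_left (J x) x v (J v),
    hR.antisymm_right x (J v) (J x) v]

lemma apply_cross_eq' (hν : HasConstAntiholCurvature J R ν) (hJ : IsCompatibleComplexStructure J)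
    (hR : IsAlgCurvatureTensor R) {x v : E} (hxv : ⟪x, v⟫ = 0) (hJxv : ⟪J x, v⟫ = 0) :
    R v x (J x) (J v) = -(1 / 2) * R x (J x) v (J v) := by
  linarith [hν.apply_cross_eq hJ hR hxv hJxv, hR.bianchi x (J x) v (J v),
    hR.pair_symm (J x) v x (J v)]

lemma holSec_add_holSec (hν : HasConstAntiholCurvature J R ν) (hJ : IsCompatibleComplexStructure J)
    (hR : IsAlgCurvatureTensor R) {x v : E} (hx : ⟪x, x⟫ = 1) (hv : ⟪v, v⟫ = 1)
    (hxv : ⟪x, v⟫ = 0) (hJxv : ⟪J x, v⟫ = 0) :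
    R x (J x) (J x) x + R v (J v) (J v) v + 3 * R x (J x) v (J v) = 2 * ν := by
  have hvx : ⟪v, x⟫ = 0 := by rw [real_inner_comm, hxv]
  have hvJx : ⟪v, J x⟫ = 0 := by rw [real_inner_comm, hJxv]
  have hxJv : ⟪x, J v⟫ = 0 := by linarith [hJ.inner_map_left x v]
  have hJvx : ⟪J v, x⟫ = 0 := by rw [real_inner_comm, hxJv]
  have hJxJv : ⟪J x, J v⟫ = 0 := by rw [hJ.inner_map_map, hxv]
  have hJvJx : ⟪J v, J x⟫ = 0 := by rw [hJ.inner_map_map, hvx]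
  have hJx : ⟪J x, J x⟫ = 1 := by rw [hJ.inner_map_map, hx]
  have hJv : ⟪J v, J v⟫ = 1 := by rw [hJ.inner_map_map, hv]
  have hplus := hν.apply_eq (x := x + v) (y := J x - J v)
    (by simp only [inner_add_left, inner_sub_right, hJ.inner_self_map, hxJv, hvJx]; ring)
    (by simp only [map_add, inner_add_left, inner_sub_right, hJx, hJv, hJxJv, hJvJx]; ring)
  -- `x - v` would stay unexpanded: `map_sub` is not found for the first argument of `R`.
  have hminus := hν.apply_eq (x := x + (-1 : ℝ) • v) (y := J x + J v)
    (by simp only [inner_add_left, inner_add_right, real_inner_smul_left, hJ.inner_self_map,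
      hxJv, hvJx]; ring)
    (by simp only [map_add, map_smul, inner_add_left, inner_add_right, real_inner_smul_left, hJx,
      hJv, hJxJv, hJvJx]; ring)
  simp only [map_add, map_sub, map_smul, LinearMap.add_apply, LinearMap.sub_apply,
    LinearMap.smul_apply, smul_eq_mul, inner_add_left, inner_add_right, inner_sub_left,
    inner_sub_right, real_inner_smul_left, real_inner_smul_right, hx, hv, hxv, hvx, hJx, hJv, hJxJv,
    hJvJx] at hplus hminus
  have hxJv' := hν.apply_eq hxJv hJxJv
  have hvJx' := hν.apply_eq hvJx hJvJx
  rw [hx, hJv] at hxJv'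
  rw [hv, hJx] at hvJx'
  linarith [hν.apply_cross_eq hJ hR hxv hJxv, hν.apply_cross_eq hJ hR hvx hJvx,
    hR.pair_symm v (J v) x (J x), hR.antisymm_right x (J x) v (J v),
    hR.pair_symm v (J v) (J x) x, hR.antisymm_left (J x) x v (J v)]

end HasConstAntiholCurvature

section Trace

variable {ι κ : Type*} [Fintype ι] [Fintype κ]

noncomputable def orthProj (c : κ → E) : E →ₗ[ℝ] E := ∑ k, (innerₗ E (c k)).smulRight (c k)

lemma orthProj_apply (c : κ → E) (e : E) : orthProj c e = ∑ k, ⟪c k, e⟫ • c k := by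
  simp [orthProj]

lemma orthProj_apply_self {c : κ → E} (hc : Orthonormal ℝ c) (k : κ) :
    orthProj c (c k) = c k := by
  classical
  simp [orthProj_apply, orthonormal_iff_ite.mp hc, ite_smul]

lemma inner_sub_orthProj {c : κ → E} (hc : Orthonormal ℝ c) (k : κ) (e : E) :
    ⟪c k, e - orthProj c e⟫ = 0 := by
  classical
  simp [orthProj_apply, inner_sub_right, inner_sum, inner_smul_right,
    orthonormal_iff_ite.mp hc]

lemma sum_apply_orthProj (b : OrthonormalBasis ι ℝ E) (c : κ → E)
    (T : E →ₗ[ℝ] E →ₗ[ℝ] ℝ) :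
    ∑ i, T (orthProj c (b i)) (b i) = ∑ k, T (c k) (c k) := by
  simp only [orthProj_apply, map_sum, map_smul, LinearMap.sum_apply, LinearMap.smul_apply,
    smul_eq_mul]
  rw [Finset.sum_comm]
  refine Finset.sum_congr rfl fun k _ => ?_
  calc ∑ i, ⟪c k, b i⟫ * T (c k) (b i) = T (c k) (∑ i, ⟪b i, c k⟫ • b i) := by
        simp [real_inner_comm]
    _ = T (c k) (c k) := by rw [b.sum_repr']

lemma sum_sub_eq_of_eqOn_orthogonal (b : OrthonormalBasis ι ℝ E) {c : κ → E}
    (hc : Orthonormal ℝ c) (T U : E →ₗ[ℝ] E →ₗ[ℝ] ℝ)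
    (h : ∀ v, (∀ k, ⟪c k, v⟫ = 0) → T v v = U v v) :
    ∑ i, T (b i) (b i) - ∑ k, T (c k) (c k) = ∑ i, U (b i) (b i) - ∑ k, U (c k) (c k) := by
  set D := T - U
  set P := orthProj c
  have hD : ∀ e, D e e = D (e - P e) (e - P e) + D (P e) e + D.flip (P e) e
      - D.compl₂ P (P e) e := by
    intro e
    simp only [map_sub, LinearMap.sub_apply, LinearMap.flip_apply, LinearMap.compl₂_apply]
    ring
  have hres : ∀ e, D (e - P e) (e - P e) = 0 := fun e => by
    rw [LinearMap.sub_apply, LinearMap.sub_apply, h _ fun k => inner_sub_orthProj hc k e,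
      sub_self]
  have key : ∑ i, D (b i) (b i) = ∑ k, D (c k) (c k) := by
    rw [Finset.sum_congr rfl fun i _ => hD (b i)]
    simp only [hres, zero_add, Finset.sum_sub_distrib, Finset.sum_add_distrib]
    rw [sum_apply_orthProj, sum_apply_orthProj, sum_apply_orthProj]
    simp [orthProj_apply_self hc, P]
  simp only [D, LinearMap.sub_apply, Finset.sum_sub_distrib] at key
  linarith

end Trace

noncomputable def curvForm (R : E →ₗ[ℝ] E →ₗ[ℝ] E →ₗ[ℝ] E →ₗ[ℝ] ℝ) (y z : E) :
    E →ₗ[ℝ] E →ₗ[ℝ] ℝ :=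
  LinearMap.mk₂ ℝ (fun u w => R u y z w) (by intros; simp) (by intros; simp) (by intros; simp)
    (by intros; simp)

@[simp]
lemma curvForm_apply (y z u w : E) : curvForm R y z u w = R u y z w := rfl

lemma apply_self_eq_of_norm_eq_one {T U : E →ₗ[ℝ] E →ₗ[ℝ] ℝ} {p : E → Prop}
    (hp : ∀ (t : ℝ) v, p v → p (t • v)) (h : ∀ u, ‖u‖ = 1 → p u → T u u = U u u) {v : E}
    (hv : p v) : T v v = U v v := by
  rcases eq_or_ne v 0 with rfl | hv0
  · simp
  have hu := h _ (norm_smul_inv_norm hv0) (hp _ _ hv)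
  simp only [map_smul, LinearMap.smul_apply, smul_eq_mul] at hu
  have : ‖v‖⁻¹ ≠ 0 := inv_ne_zero (norm_ne_zero_iff.mpr hv0)
  simpa [this] using hu

lemma LinearMap.eq_smul_innerₗ_of_apply_self_eq {B : E →ₗ[ℝ] E →ₗ[ℝ] ℝ}
    (hB : ∀ x y, B x y = B y x) {K : ℝ} (h : ∀ u, ‖u‖ = 1 → B u u = K) :
    B = K • innerₗ E := by
  have hdiag : ∀ v, B v v = (K • innerₗ E) v v := fun v =>
    apply_self_eq_of_norm_eq_one (p := fun _ => True) (fun _ _ _ => trivial)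
      (fun u hu _ => by simp [h u hu, hu]) trivial
  ext x y
  have hxy := hdiag (x + y)
  simp only [map_add, LinearMap.add_apply, hdiag x, hdiag y, hB y x] at hxy
  simp only [LinearMap.smul_apply, innerₗ_apply_apply, smul_eq_mul, real_inner_comm x y] at hxy ⊢
  linarith

section Ricci

variable {ι : Type*} [Fintype ι] (b : OrthonormalBasis ι ℝ E)

noncomputable def ricci (R : E →ₗ[ℝ] E →ₗ[ℝ] E →ₗ[ℝ] E →ₗ[ℝ] ℝ) : E →ₗ[ℝ] E →ₗ[ℝ] ℝ :=
  LinearMap.mk₂ ℝ (fun x y => ∑ i, R (b i) x y (b i))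
    (by intros; simp [Finset.sum_add_distrib]) (by intros; simp [Finset.mul_sum])
    (by intros; simp [Finset.sum_add_distrib]) (by intros; simp [Finset.mul_sum])

noncomputable def ricciJ (J : E →ₗ[ℝ] E) (R : E →ₗ[ℝ] E →ₗ[ℝ] E →ₗ[ℝ] E →ₗ[ℝ] ℝ) :
    E →ₗ[ℝ] E →ₗ[ℝ] ℝ :=
  LinearMap.mk₂ ℝ (fun x y => ∑ i, R (b i) x (J y) (J (b i)))
    (by intros; simp [Finset.sum_add_distrib]) (by intros; simp [Finset.mul_sum])
    (by intros; simp [Finset.sum_add_distrib]) (by intros; simp [Finset.mul_sum])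

lemma ricci_apply (x y : E) : ricci b R x y = ∑ i, R (b i) x y (b i) := rfl

lemma ricciJ_apply (x y : E) : ricciJ b J R x y = ∑ i, R (b i) x (J y) (J (b i)) := rfl

lemma ricci_symm (hR : IsAlgCurvatureTensor R) (x y : E) : ricci b R x y = ricci b R y x := by
  simp only [ricci_apply, hR.apply_rev (b _) x y]

lemma ricciJ_symm (hJ : IsCompatibleComplexStructure J) (hR : IsAlgCurvatureTensor R)
    (hRK : ∀ x y z u : E, R x y z u = R (J x) (J y) (J z) (J u)) (x y : E) :
    ricciJ b J R x y = ricciJ b J R y x := by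
  refine Finset.sum_congr rfl fun i _ => ?_
  rw [hR.apply_rev (b i) y, hRK, hJ.map_map, hJ.map_map]
  simp

lemma ricci_self_eq (hν : HasConstAntiholCurvature J R ν) (hJ : IsCompatibleComplexStructure J)
    (hR : IsAlgCurvatureTensor R) {x : E} (hx : ‖x‖ = 1) :
    ricci b R x x = (Fintype.card ι - 2) * ν + R x (J x) (J x) x := by
  have h := sum_sub_eq_of_eqOn_orthogonal b (hJ.orthonormal_pair hx) (curvForm R x x)
    (ν • innerₗ E) fun v hv => by
      have hvx : ⟪v, x⟫ = 0 := by simpa [real_inner_comm] using hv 0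
      have hJvx : ⟪J v, x⟫ = 0 := by simpa [hJ.inner_map_swap v] using hv 1
      simp [hν.apply_eq hvx hJvx, hx]
  simp only [curvForm_apply, LinearMap.smul_apply, innerₗ_apply_apply, smul_eq_mul,
    Fin.sum_univ_two, Matrix.cons_val_zero, Matrix.cons_val_one, Matrix.cons_val_fin_one,
    hR.apply_self_left, real_inner_self_eq_norm_sq, b.norm_eq_one, hx, hJ.norm_map, one_pow,
    mul_one, zero_add, Finset.sum_const, Finset.card_univ, nsmul_eq_mul] at h
  rw [ricci_apply, hR.apply_swap_swap x]
  linarith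

lemma six_mul_apply_eq_of_orthogonal (hν : HasConstAntiholCurvature J R ν)
    (hJ : IsCompatibleComplexStructure J) (hR : IsAlgCurvatureTensor R) {x v : E} (hx : ‖x‖ = 1)
    (hxv : ⟪x, v⟫ = 0) (hJxv : ⟪J x, v⟫ = 0) :
    6 * R v x (J x) (J v) =
      (R x (J x) (J x) x - Fintype.card ι * ν) * ⟪v, v⟫ + ricci b R v v := by
  have hx' : ⟪x, x⟫ = 1 := by rw [real_inner_self_eq_norm_sq, hx, one_pow]
  have key := apply_self_eq_of_norm_eq_one
    (T := (6 : ℝ) • (curvForm R x (J x)).compl₂ J)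
    (U := (R x (J x) (J x) x - Fintype.card ι * ν) • innerₗ E + ricci b R)
    (p := fun v => ⟪x, v⟫ = 0 ∧ ⟪J x, v⟫ = 0)
    (fun t v ⟨h1, h2⟩ => by simp [inner_smul_right, h1, h2])
    (fun u hu ⟨hxu, hJxu⟩ => by
      have hu' : ⟪u, u⟫ = 1 := by rw [real_inner_self_eq_norm_sq, hu, one_pow]
      have hH := hν.holSec_add_holSec hJ hR hx' hu' hxu hJxu
      have hS := ricci_self_eq b hν hJ hR hu
      have hc := hν.apply_cross_eq' hJ hR hxu hJxu
      simp only [LinearMap.add_apply, LinearMap.smul_apply, LinearMap.compl₂_apply,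
        curvForm_apply, innerₗ_apply_apply, smul_eq_mul, hu']
      linarith)
    ⟨hxv, hJxv⟩
  simpa using key

lemma ricciJ_self_eq (hν : HasConstAntiholCurvature J R ν)
    (hJ : IsCompatibleComplexStructure J) (hR : IsAlgCurvatureTensor R) {x : E} (hx : ‖x‖ = 1) :
    6 * ricciJ b J R x x = (Fintype.card ι + 2) * R x (J x) (J x) x
      + ∑ i, ricci b R (b i) (b i) - ((Fintype.card ι : ℝ) ^ 2 - 4) * ν := by
  have h := sum_sub_eq_of_eqOn_orthogonal b (hJ.orthonormal_pair hx)
    ((6 : ℝ) • (curvForm R x (J x)).compl₂ J)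
    ((R x (J x) (J x) x - Fintype.card ι * ν) • innerₗ E + ricci b R) fun v hv => by
      simpa using
        six_mul_apply_eq_of_orthogonal b hν hJ hR hx (by simpa using hv 0) (by simpa using hv 1)
  have hSx := ricci_self_eq b hν hJ hR hx
  have hSJx := ricci_self_eq b hν hJ hR ((hJ.norm_map x).trans hx)
  simp only [LinearMap.add_apply, LinearMap.smul_apply, LinearMap.compl₂_apply, curvForm_apply,
    innerₗ_apply_apply, smul_eq_mul, Fin.sum_univ_two, Matrix.cons_val_zero, Matrix.cons_val_one,
    Matrix.cons_val_fin_one, hR.apply_self_left, hJ.map_map, map_neg, real_inner_self_eq_norm_sq,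
    b.norm_eq_one, hx, hJ.norm_map, one_pow, mul_one, mul_zero, zero_add] at h
  rw [← Finset.mul_sum, ← ricciJ_apply, Finset.sum_add_distrib, Finset.sum_const, Finset.card_univ,
    nsmul_eq_mul] at h
  simp only [hJ.map_map, map_neg, LinearMap.neg_apply, neg_neg, ← hR.apply_swap_swap x] at hSJx
  linear_combination h - hSx - hSJx - 6 * hR.antisymm_left (J x) x (J x) x

theorem card_mul_six_ricciJ_sub_eq (hν : HasConstAntiholCurvature J R ν)
    (hJ : IsCompatibleComplexStructure J) (hR : IsAlgCurvatureTensor R)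
    (hRK : ∀ x y z u : E, R x y z u = R (J x) (J y) (J z) (J u)) (x y : E) :
    (Fintype.card ι : ℝ) * (6 * ricciJ b J R x y - (Fintype.card ι + 2) * ricci b R x y) =
      (6 * ∑ i, ricciJ b J R (b i) (b i) - (Fintype.card ι + 2) * ∑ i, ricci b R (b i) (b i))
        * ⟪x, y⟫ := by
  set N : ℝ := (Fintype.card ι : ℝ)
  set K := ∑ i, ricci b R (b i) (b i) - 2 * (N ^ 2 - 4) * ν
  have hB : (6 : ℝ) • ricciJ b J R - (N + 2) • ricci b R = K • innerₗ E := by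
    refine LinearMap.eq_smul_innerₗ_of_apply_self_eq (fun x y => ?_) (fun u hu => ?_)
    · simp [ricci_symm b hR x y, ricciJ_symm b hJ hR hRK x y]
    · simp only [LinearMap.sub_apply, LinearMap.smul_apply, smul_eq_mul, K]
      linear_combination ricciJ_self_eq b hν hJ hR hu - (N + 2) * ricci_self_eq b hν hJ hR hu
  have htrace :
      6 * ∑ i, ricciJ b J R (b i) (b i) - (N + 2) * ∑ i, ricci b R (b i) (b i) = N * K := by
    have := Finset.sum_congr rfl fun i (_ : i ∈ Finset.univ) => LinearMap.congr_fun₂ hB (b i) (b i)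
    simpa [Finset.sum_sub_distrib, ← Finset.mul_sum] using this
  have hxy := LinearMap.congr_fun₂ hB x y
  simp only [LinearMap.sub_apply, LinearMap.smul_apply, innerₗ_apply_apply, smul_eq_mul] at hxy
  rw [htrace, hxy]
  ring

end Ricci

end

/-- Proposition 1, equation (7): 3S' - (n+1)S = (1/(2n))(3τ' - (n+1)τ) g. -/
theorem stmt_3 {E : Type*} [NormedAddCommGroup E] [InnerProductSpace ℝ E]
    {n : ℕ} (hn : 4 ≤ 2 * n)
    (b : OrthonormalBasis (Fin (2 * n)) ℝ E)
    (J : E →ₗ[ℝ] E)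
    (hJ2 : ∀ x : E, J (J x) = -x)
    (hJg : ∀ x y : E, ⟪J x, J y⟫ = ⟪x, y⟫)
    (R : E →ₗ[ℝ] E →ₗ[ℝ] E →ₗ[ℝ] E →ₗ[ℝ] ℝ)
    (hR1 : ∀ x y z u : E, R x y z u = - R y x z u)
    (hR2 : ∀ x y z u : E, R x y z u = - R x y u z)
    (hRb : ∀ x y z u : E, R x y z u + R y z x u + R z x y u = 0)
    (hRK : ∀ x y z u : E, R x y z u = R (J x) (J y) (J z) (J u))
    (ν : ℝ)
    (hν : ∀ x y : E, ‖x‖ = 1 → ‖y‖ = 1 → ⟪x, y⟫ = 0 → ⟪J x, y⟫ = 0 →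
      R x y y x = ν)
    (S : E → E → ℝ)
    (hS : ∀ x y : E, S x y = ∑ i, R (b i) x y (b i))
    (S' : E → E → ℝ)
    (hS' : ∀ x y : E, S' x y = ∑ i, R (b i) x (J y) (J (b i)))
    (τ τ' : ℝ)
    (hτ : τ = ∑ i, S (b i) (b i))
    (hτ' : τ' = ∑ i, S' (b i) (b i)) :
    ∀ x y : E, 3 * S' x y - ((n : ℝ) + 1) * S x y =
      (1 / (2 * (n : ℝ))) * (3 * τ' - ((n : ℝ) + 1) * τ) * ⟪x, y⟫ := by
  intro x y
  have hn0 : (n : ℝ) ≠ 0 := by exact_mod_cast (by omega : n ≠ 0)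
  have key := card_mul_six_ricciJ_sub_eq b hν ⟨hJ2, hJg⟩ ⟨hR1, hR2, hRb⟩ hRK x y
  simp only [ricci_apply, ricciJ_apply, ← hS, ← hS', ← hτ, ← hτ', Fintype.card_fin] at key
  push_cast at key
  field_simp
  linear_combination key / 2
end
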